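/- arXiv:1706.00294 — 5 statements merged into one kernel-verified Lean document; each statement's English description precedes it below -/
import Mathlib

section
/- For all Schwartz functions f, g : ℂ → ℂ one has ∫_ℂ Zf(z) · conj(g(z)) dz = − ∫_ℂ f(z) · conj(Z̄g(z)) dz; that is, the adjoint of Z (on Schwartz functions, with respect to the L²(ℂ) inner product) is −Z̄. -/
open MeasureTheory Complex
open scoped ENNReal NNReal
noncomputable section

/-- ∂/∂x -/
def pdx (f : ℂ → ℂ) (z : ℂ) : ℂ := fderiv ℝ f z 1
/-- ∂/∂y -/
def pdy (f : ℂ → ℂ) (z : ℂ) : ℂ := fderiv ℝ f z Complex.I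
/-- ∂/∂z := ∂/∂x − i ∂/∂y -/
def pdz (f : ℂ → ℂ) (z : ℂ) : ℂ := pdx f z - Complex.I * pdy f z
/-- ∂/∂z̄ := ∂/∂x + i ∂/∂y -/
def pdzbar (f : ℂ → ℂ) (z : ℂ) : ℂ := pdx f z + Complex.I * pdy f z
/-- Zf(z) = ∂f/∂z + (1/2) z̄ f(z) -/
def Zop (f : ℂ → ℂ) (z : ℂ) : ℂ := pdz f z + (1/2 : ℂ) * (starRingEnd ℂ) z * f z
/-- Z̄f(z) = ∂f/∂z̄ − (1/2) z f(z) -/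
def Zbarop (f : ℂ → ℂ) (z : ℂ) : ℂ := pdzbar f z - (1/2 : ℂ) * z * f z

/-- normalized Hermite functions -/
def hermiteFn (k : ℕ) (x : ℝ) : ℝ :=
  ((2:ℝ)^k * Real.sqrt Real.pi * (Nat.factorial k : ℝ)) ^ (-(1/2 : ℝ)) * (-1:ℝ)^k *
    Real.exp (x^2/2) * iteratedDeriv k (fun t => Real.exp (-t^2)) x

/-- special Hermite functions φ_{m,n} -/
def sphi (m n : ℕ) (z : ℂ) : ℂ :=
  (((2 * Real.pi) ^ (-(1/2:ℝ)) : ℝ) : ℂ) *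
    ∫ ξ : ℝ, Complex.exp (Complex.I * ξ * z.re) *
      (hermiteFn m (ξ + z.im/2) : ℂ) * (hermiteFn n (ξ - z.im/2) : ℂ)

/-- special Hermite operator L -/
def Lop (f : ℂ → ℂ) (z : ℂ) : ℂ :=
  -(pdx (pdx f) z + pdy (pdy f) z) + (1/4 : ℂ) * ((‖z‖^2 : ℝ) : ℂ) * f z
    - Complex.I * ((z.re : ℂ) * pdy f z - (z.im : ℂ) * pdx f z)

/-- Gaussian integer associated to k ∈ ℤ² -/
def gint (k : ℤ × ℤ) : ℂ := (k.1 : ℂ) + (k.2 : ℂ) * Complex.I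

/-- twisted translation -/
def Tt (m n : ℤ) (f : ℂ → ℂ) (z : ℂ) : ℂ :=
  Complex.exp (2 * Real.pi * Complex.I * ((n : ℂ) * z.re - (m : ℂ) * z.im)) *
    f (z - ((m : ℂ) + (n : ℂ) * Complex.I))

/-- twisted Zak transform -/
def Zak (f : ℂ → ℂ) (z w : ℂ) : ℂ :=
  ∑' k : ℤ × ℤ, f (z - gint k) *
    Complex.exp (2 * Real.pi * Complex.I * (((w * (starRingEnd ℂ) (gint k)).im : ℝ) : ℂ))

/-- the cell k + [0,1]² -/
def cell (k : ℤ × ℤ) : Set ℂ :=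
  {z : ℂ | z.re ∈ Set.Icc (k.1 : ℝ) (k.1 + 1) ∧ z.im ∈ Set.Icc (k.2 : ℝ) (k.2 + 1)}

/-- amalgam local sup norm -/
def amalgamNorm (f : ℂ → ℂ) (k : ℤ × ℤ) : ℝ := sSup ((fun z => ‖f z‖) '' cell k)

/-- unit square Q = [0,1) × [0,1) -/
def Qset : Set ℂ := {z : ℂ | z.re ∈ Set.Ico (0:ℝ) 1 ∧ z.im ∈ Set.Ico (0:ℝ) 1}

/-- frame condition with bounds A, B on a sub-collection S of twisted translates of g -/
def IsTwistedFrameOn (g : ℂ → ℂ) (S : Set (ℤ × ℤ)) (A B : ℝ) : Prop :=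
  ∀ f : ℂ → ℂ, MemLp f 2 (volume : Measure ℂ) →
    A * ∫ z : ℂ, ‖f z‖^2 ≤
        (∑' k : S, ‖∫ z : ℂ, f z * (starRingEnd ℂ) (Tt (k : ℤ × ℤ).1 (k : ℤ × ℤ).2 g z)‖^2) ∧
    (∑' k : S, ‖∫ z : ℂ, f z * (starRingEnd ℂ) (Tt (k : ℤ × ℤ).1 (k : ℤ × ℤ).2 g z)‖^2) ≤
        B * ∫ z : ℂ, ‖f z‖^2

/-- the twisted Gabor system of g is a frame for L²(ℂ) -/
def IsTwistedFrame (g : ℂ → ℂ) : Prop :=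
  ∃ A B : ℝ, 0 < A ∧ 0 < B ∧ IsTwistedFrameOn g Set.univ A B

/-- exact frame: a frame that ceases to be a frame upon deletion of any single element -/
def IsExactTwistedFrame (g : ℂ → ℂ) : Prop :=
  IsTwistedFrame g ∧
    ∀ k₀ : ℤ × ℤ, ¬ ∃ A B : ℝ, 0 < A ∧ 0 < B ∧ IsTwistedFrameOn g ({k₀}ᶜ) A B


/-! Integrating by parts in the directions `1` and `I` moves `∂/∂x - i ∂/∂y` across the pairing
`⟨u, w⟩ = ∫ u * conj w` as `-(∂/∂x + i ∂/∂y)`, while the multiplication parts of `Z` and `-Z̄` agree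
under the pairing because `conj (z * w) / 2 = conj z / 2 * conj w`. -/

open SchwartzMap
open scoped LineDeriv ComplexConjugate

namespace SchwartzMap

variable {𝕜 D : Type*} [RCLike 𝕜] [NormedAddCommGroup D] [NormedSpace ℝ D] [MeasurableSpace D]
  [BorelSpace D] {μ : Measure D}

/-- The real-bilinear map `(a, b) ↦ a * conj b`. -/
def mulConjCLM : 𝕜 →L[ℝ] 𝕜 →L[ℝ] 𝕜 :=
  ((ContinuousLinearMap.mul ℝ 𝕜).flip.comp (RCLike.conjCLE : 𝕜 ≃L[ℝ] 𝕜).toContinuousLinearMap).flip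

theorem integrable_mul_conj [SecondCountableTopology D] [μ.HasTemperateGrowth]
    (f g : 𝓢(D, 𝕜)) : Integrable (fun x ↦ f x * conj (g x)) μ :=
  (bilinLeftCLM mulConjCLM g.hasTemperateGrowth f).integrable

theorem integral_mul_conj_lineDerivOp_right_eq_neg_left [FiniteDimensional ℝ D]
    [μ.IsAddHaarMeasure] (f g : 𝓢(D, 𝕜)) (v : D) :
    ∫ x, f x * conj (∂_{v} g x) ∂μ = -∫ x, ∂_{v} f x * conj (g x) ∂μ :=
  integral_bilinear_lineDerivOp_right_eq_neg_left f g mulConjCLM v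

end SchwartzMap

theorem pdx_eq_lineDerivOp (f : 𝓢(ℂ, ℂ)) : pdx f = ∂_{(1 : ℂ)} f := by
  ext z
  simp [pdx, lineDerivOp_apply_eq_fderiv]

theorem pdy_eq_lineDerivOp (f : 𝓢(ℂ, ℂ)) : pdy f = ∂_{I} f := by
  ext z
  simp [pdy, lineDerivOp_apply_eq_fderiv]

theorem stmt5 (f g : SchwartzMap ℂ ℂ) :
    ∫ z : ℂ, Zop (⇑f) z * (starRingEnd ℂ) (g z)
      = - ∫ z : ℂ, f z * (starRingEnd ℂ) (Zbarop (⇑g) z) := by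
  set zg : 𝓢(ℂ, ℂ) := smulLeftCLM ℂ (fun z : ℂ ↦ (1 / 2 : ℂ) * z) g
  have zg_apply (z : ℂ) : zg z = (1 / 2 : ℂ) * z * g z := by
    have : (fun z : ℂ ↦ (1 / 2 : ℂ) * z).HasTemperateGrowth := by fun_prop
    rw [smulLeftCLM_apply_apply this, smul_eq_mul, mul_assoc]
  have hZ : (fun z ↦ Zop f z * conj (g z)) = fun z ↦
      (∂_{(1 : ℂ)} f z * conj (g z) - I * (∂_{I} f z * conj (g z))) + f z * conj (zg z) := by
    ext z
    simp only [Zop, pdz, pdx_eq_lineDerivOp, pdy_eq_lineDerivOp, zg_apply, map_mul, map_div₀,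
      map_one, map_ofNat]
    ring
  have hZbar : (fun z ↦ f z * conj (Zbarop g z)) = fun z ↦
      (f z * conj (∂_{(1 : ℂ)} g z) - I * (f z * conj (∂_{I} g z))) - f z * conj (zg z) := by
    ext z
    simp only [Zbarop, pdzbar, pdx_eq_lineDerivOp, pdy_eq_lineDerivOp, zg_apply, map_add, map_sub,
      map_mul, map_div₀, map_one, map_ofNat, conj_I]
    ring
  have hint (u w : 𝓢(ℂ, ℂ)) := integrable_mul_conj (μ := volume) u w
  rw [hZ, hZbar, integral_add, integral_sub, integral_sub, integral_sub, integral_const_mul,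
    integral_const_mul, integral_mul_conj_lineDerivOp_right_eq_neg_left,
    integral_mul_conj_lineDerivOp_right_eq_neg_left]
  · ring
  all_goals fun_prop
end
end

section
/- Let f : ℂ → ℂ be continuous with Σ_{k∈ℤ²} sup_{z ∈ k+[0,1]²} |f(z)| < ∞, and let (m,n) ∈ ℤ². Then for all z = x + iy and w = r + is in ℂ: Z^t(T^t_{(m,n)} f)(z, w) = e^{2πi(nx − my)} e^{2πi(nr − ms)} Z^t f(z, w). -/
open MeasureTheory Complex
open scoped ENNReal NNReal
noncomputable section

/-
Substituting `k ↦ k - (m, n)` in the Zak series turns each term of `Z^t(T^t_{(m,n)} f)` into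
the corresponding term of `Z^t f` times the two phases: the phase of `T^t_{(m,n)}` evaluated at the
lattice point `z - k + (m, n)` differs from its value at `z` by `e^{2πi(m k₂ - n k₁)} = 1`, and the
Zak character `k ↦ e^{2πi Im(w k̄)}` is multiplicative in `k`.
-/

lemma gint_sub (k l : ℤ × ℤ) : gint (k - l) = gint k - gint l := by
  simp only [gint, Prod.fst_sub, Prod.snd_sub, Int.cast_sub]
  ring

lemma Tt_apply_sub_gint (m n : ℤ) (f : ℂ → ℂ) (z : ℂ) (k : ℤ × ℤ) :
    Tt m n f (z - gint (k - (m, n))) =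
      exp (2 * Real.pi * I * ((n : ℂ) * z.re - (m : ℂ) * z.im)) * f (z - gint k) := by
  have hshift : z - gint (k - (m, n)) - ((m : ℂ) + (n : ℂ) * I) = z - gint k := by
    rw [gint_sub, show gint (m, n) = (m : ℂ) + n * I from rfl]
    ring
  have hphase : 2 * Real.pi * I * ((n : ℂ) * (z - gint (k - (m, n))).re
        - (m : ℂ) * (z - gint (k - (m, n))).im) =
      2 * Real.pi * I * ((n : ℂ) * z.re - (m : ℂ) * z.im)
        + (m * k.2 - n * k.1 : ℤ) * (2 * Real.pi * I) := by
    simp only [gint, Prod.fst_sub, Prod.snd_sub, sub_re, sub_im, add_re, add_im, mul_re, mul_im,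
      I_re, I_im, intCast_re, intCast_im]
    push_cast
    ring
  rw [Tt, hshift, hphase, exp_add, exp_int_mul_two_pi_mul_I, mul_one]

lemma im_mul_conj_gint_sub (w : ℂ) (k : ℤ × ℤ) (m n : ℤ) :
    ((w * (starRingEnd ℂ) (gint (k - (m, n)))).im : ℂ) =
      (w * (starRingEnd ℂ) (gint k)).im + ((n : ℂ) * w.re - (m : ℂ) * w.im) := by
  simp only [gint, Prod.fst_sub, Prod.snd_sub, mul_im, map_add, map_mul, conj_I,
    map_intCast, add_re, add_im, mul_re, I_re, I_im, intCast_re, intCast_im, neg_re, neg_im]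
  push_cast
  ring

theorem stmt7_general (f : ℂ → ℂ)
    (m n : ℤ) (z w : ℂ) :
    Zak (Tt m n f) z w =
      Complex.exp (2 * Real.pi * Complex.I * ((n : ℂ) * z.re - (m : ℂ) * z.im)) *
      Complex.exp (2 * Real.pi * Complex.I * ((n : ℂ) * w.re - (m : ℂ) * w.im)) *
      Zak f z w := by
  unfold Zak
  rw [← (Equiv.subRight ((m, n) : ℤ × ℤ)).tsum_eq, ← tsum_mul_left]
  refine tsum_congr fun k => ?_
  rw [Equiv.subRight_apply, Tt_apply_sub_gint, im_mul_conj_gint_sub, mul_add, exp_add]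
  ring

theorem stmt7 (f : ℂ → ℂ) (hf : Continuous f) (hsum : Summable (amalgamNorm f))
    (m n : ℤ) (z w : ℂ) :
    Zak (Tt m n f) z w =
      Complex.exp (2 * Real.pi * Complex.I * ((n : ℂ) * z.re - (m : ℂ) * z.im)) *
      Complex.exp (2 * Real.pi * Complex.I * ((n : ℂ) * w.re - (m : ℂ) * w.im)) *
      Zak f z w :=
  stmt7_general f m n z w
end
end

section
/- Let f : ℂ → ℂ be continuous with Σ_{k∈ℤ²} sup_{z ∈ k+[0,1]²} |f(z)| < ∞ (so that Z^t f is continuous on ℂ²). Then Z^t f has a zero in Q × Q, i.e., there exists (z, w) ∈ Q × Q with Z^t f(z, w) = 0. -/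
open MeasureTheory Complex
open scoped ENNReal NNReal
noncomputable section

/-!
If `Zak f` had no zero on `Qset × Qset`, its quasi-periodicity under Gaussian-integer shifts
would make it zero-free on all of `ℂ × ℂ`. Then `G s t = Zak f s (t * I)` is continuous and
nonvanishing on the unit square, with `G s 1 = G s 0` and `G 1 t = exp (2πit) * G 0 t`. The square
is simply connected, so `G = exp ∘ L` for a continuous `L`; the jumps `L s 1 - L s 0` and
`L 1 t - L 0 t - 2πit` lie in the discrete group `2πiℤ`, hence are constant, and comparing them
at the four corners gives `2πi = 0`.
-/

open scoped Real

theorem exists_continuous_exp_eq {A : Type*} [TopologicalSpace A] [SimplyConnectedSpace A]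
    [LocallyPathConnectedSpace A] {g : A → ℂ} (hg : Continuous g) (hg₀ : ∀ a, g a ≠ 0) :
    ∃ L : A → ℂ, Continuous L ∧ ∀ a, exp (L a) = g a := by
  obtain ⟨a₀⟩ : Nonempty A := inferInstance
  obtain ⟨L, ⟨-, hL⟩, -⟩ := isCoveringMapOn_exp.existsUnique_continuousMap_lifts ⟨g, hg⟩
    (exp_log (hg₀ a₀)) hg₀
  exact ⟨L, L.continuous, congrFun hL⟩

theorem sub_eq_sub_of_exp_eq_exp {X : Type*} [TopologicalSpace X] [PreconnectedSpace X]
    {L₁ L₂ : X → ℂ} (h₁ : Continuous L₁) (h₂ : Continuous L₂)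
    (h : ∀ x, exp (L₁ x) = exp (L₂ x)) (x y : X) : L₁ x - L₂ x = L₁ y - L₂ y := by
  have hmem (x : X) : L₁ x - L₂ x ∈ AddSubgroup.zmultiples (2 * π * I) := by
    obtain ⟨n, hn⟩ := exp_eq_exp_iff_exists_int.1 (h x)
    exact ⟨n, by simp [hn]⟩
  have : DiscreteTopology (AddSubgroup.zmultiples (2 * π * I)) :=
    NormedSpace.discreteTopology_zmultiples _
  exact congrArg Subtype.val <| PreconnectedSpace.constant inferInstance
    (f := fun x ↦ (⟨L₁ x - L₂ x, hmem x⟩ : AddSubgroup.zmultiples (2 * π * I)))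
    ((h₁.sub h₂).subtype_mk _)

theorem exists_eq_zero_of_quasiperiodic {G : unitInterval × unitInterval → ℂ}
    (hG : Continuous G)
    (hper : ∀ s, G (s, 1) = G (s, 0)) (hqp : ∀ t, G (1, t) = exp (2 * π * I * t) * G (0, t)) :
    ∃ p, G p = 0 := by
  by_contra! hG₀
  have : ContractibleSpace unitInterval :=
    (convex_Icc (0 : ℝ) 1).contractibleSpace ⟨0, by simp⟩
  have : LocallyPathConnectedSpace unitInterval :=
    (convex_Icc (0 : ℝ) 1).locallyPathConnectedSpace
  obtain ⟨L, hL, hLG⟩ := exists_continuous_exp_eq hG hG₀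
  have hs := sub_eq_sub_of_exp_eq_exp (L₁ := fun s ↦ L (s, 1)) (L₂ := fun s ↦ L (s, 0))
    (by fun_prop) (by fun_prop) (fun s ↦ by simp only [hLG, hper]) 0 1
  have ht := sub_eq_sub_of_exp_eq_exp (L₁ := fun t ↦ L (1, t))
    (L₂ := fun t ↦ L (0, t) + 2 * π * I * t) (by fun_prop) (by fun_prop)
    (fun t ↦ by rw [exp_add, hLG, hLG, hqp, mul_comm]) 0 1
  simp only [Set.Icc.coe_zero, Set.Icc.coe_one, ofReal_zero, ofReal_one] at ht
  exact two_pi_I_ne_zero (by linear_combination ht - hs)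

theorem gint_add (k m : ℤ × ℤ) : gint (k + m) = gint k + gint m := by
  simp only [gint, Prod.fst_add, Prod.snd_add]
  push_cast
  ring

@[simp]
theorem gint_re (k : ℤ × ℤ) : (gint k).re = k.1 := by simp [gint]

@[simp]
theorem gint_im (k : ℤ × ℤ) : (gint k).im = k.2 := by simp [gint]

theorem gint_mul_conj_gint_im (n k : ℤ × ℤ) :
    (gint n * (starRingEnd ℂ) (gint k)).im = ((n.2 * k.1 - n.1 * k.2 : ℤ) : ℝ) := by
  simp only [mul_im, conj_re, conj_im, gint_re, gint_im]
  push_cast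
  ring

theorem zak_add_gint_left (f : ℂ → ℂ) (z w : ℂ) (m : ℤ × ℤ) :
    Zak f (z + gint m) w =
      exp (2 * π * I * (((w * (starRingEnd ℂ) (gint m)).im : ℝ) : ℂ)) * Zak f z w := by
  rw [Zak, Zak, ← tsum_mul_left, ← (Equiv.addRight m).tsum_eq]
  refine tsum_congr fun k ↦ ?_
  rw [Equiv.coe_addRight, gint_add, add_sub_add_right_eq_sub, map_add, mul_add, add_im,
    ofReal_add, mul_add, exp_add]
  ring

theorem zak_add_gint_right (f : ℂ → ℂ) (z w : ℂ) (n : ℤ × ℤ) :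
    Zak f z (w + gint n) = Zak f z w := by
  refine tsum_congr fun k ↦ congrArg _ ?_
  rw [add_mul, add_im, gint_mul_conj_gint_im, ofReal_add, mul_add, exp_add, ofReal_intCast,
    mul_comm _ (_ : ℤ).cast, exp_int_mul_two_pi_mul_I, mul_one]

theorem zak_add_gint_add_gint_eq_zero_iff (f : ℂ → ℂ) (z w : ℂ) (m n : ℤ × ℤ) :
    Zak f (z + gint m) (w + gint n) = 0 ↔ Zak f z w = 0 := by
  rw [zak_add_gint_right, zak_add_gint_left, mul_eq_zero, or_iff_right (exp_ne_zero _)]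

theorem exists_sub_gint_mem_Qset (z : ℂ) : ∃ m : ℤ × ℤ, z - gint m ∈ Qset := by
  refine ⟨(⌊z.re⌋, ⌊z.im⌋), ?_, ?_⟩ <;>
  simp [Int.self_sub_floor, Int.fract_nonneg, Int.fract_lt_one]

theorem exists_mem_Qset_zak_eq_zero {f : ℂ → ℂ} {z w : ℂ} (h : Zak f z w = 0) :
    ∃ z ∈ Qset, ∃ w ∈ Qset, Zak f z w = 0 := by
  obtain ⟨m, hm⟩ := exists_sub_gint_mem_Qset z
  obtain ⟨n, hn⟩ := exists_sub_gint_mem_Qset w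
  refine ⟨_, hm, _, hn, (zak_add_gint_add_gint_eq_zero_iff f _ _ m n).1 ?_⟩
  simpa using h

theorem isCompact_cell (k : ℤ × ℤ) : IsCompact (cell k) :=
  isCompact_Icc.reProdIm isCompact_Icc

theorem norm_le_amalgamNorm {f : ℂ → ℂ} (hf : Continuous f) {k : ℤ × ℤ} {z : ℂ}
    (hz : z ∈ cell k) : ‖f z‖ ≤ amalgamNorm f k :=
  le_csSup ((isCompact_cell k).image hf.norm).bddAbove ⟨z, hz, rfl⟩

theorem sub_gint_mem_cell {z : ℂ} {m : ℤ × ℤ} (hz : z ∈ cell m) (k : ℤ × ℤ) :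
    z - gint k ∈ cell (m - k) := by
  obtain ⟨⟨h₁, h₂⟩, h₃, h₄⟩ := hz
  refine ⟨⟨?_, ?_⟩, ?_, ?_⟩ <;>
    simp only [sub_re, sub_im, gint_re, gint_im, Prod.fst_sub, Prod.snd_sub, Int.cast_sub] <;>
    linarith

theorem continuousOn_zak {f : ℂ → ℂ} (hf : Continuous f) (hsum : Summable (amalgamNorm f))
    (m : ℤ × ℤ) :
    ContinuousOn (fun p : ℂ × ℂ ↦ Zak f p.1 p.2) (cell m ×ˢ Set.univ) := by
  refine continuousOn_tsum (u := fun k ↦ amalgamNorm f (m - k)) (fun k ↦ by fun_prop)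
    (hsum.comp_injective sub_right_injective) fun k p hp ↦ ?_
  rw [norm_mul, mul_comm (2 * (π : ℂ)), mul_assoc, ← ofReal_ofNat, ← ofReal_mul,
    ← ofReal_mul, mul_comm I, norm_exp_ofReal_mul_I, mul_one]
  exact norm_le_amalgamNorm hf (sub_gint_mem_cell hp.1 k)

theorem stmt11 (f : ℂ → ℂ) (hf : Continuous f) (hsum : Summable (amalgamNorm f)) :
    ∃ z ∈ Qset, ∃ w ∈ Qset, Zak f z w = 0 := by
  have hG : Continuous fun p : unitInterval × unitInterval ↦ Zak f (p.1 : ℂ) (p.2 * I) :=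
    (continuousOn_zak hf hsum 0).comp_continuous
      (f := fun p : unitInterval × unitInterval ↦ ((p.1 : ℂ), (p.2 : ℂ) * I)) (by fun_prop)
      fun p ↦ ⟨by simp [cell, p.1.2.1, p.1.2.2], trivial⟩
  obtain ⟨⟨s, t⟩, hst⟩ := exists_eq_zero_of_quasiperiodic hG
    (fun s ↦ by simpa [gint] using zak_add_gint_right f s 0 (0, 1))
    (fun t ↦ by simpa [gint] using zak_add_gint_left f 0 (t * I) (1, 0))
  exact exists_mem_Qset_zak_eq_zero hst
end
end

section
/- There exists an infinitely differentiable function g : ℂ → ℝ such that g ∈ L²(ℂ), Σ_{k∈ℤ²} sup_{z ∈ k+[0,1]²} |g(z)| < ∞ (i.e., g ∈ W(C₀, ℓ¹)), and yet ∫_ℂ |Z̄g(z)|² dz = +∞. -/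
open MeasureTheory Complex
open scoped ENNReal NNReal
noncomputable section

/-! ### Auxiliary construction for stmt13 -/

namespace Stmt13Aux

/-- the basic profile function `(1+t^2)^(-5/8)` -/
def uu (t : ℝ) : ℝ := (1 + t ^ 2) ^ (-(5/8) : ℝ)

/-- its derivative -/
def du (t : ℝ) : ℝ := (-(5/8) : ℝ) * (1 + t ^ 2) ^ ((-(5/8) : ℝ) - 1) * (2 * t)

lemma base_pos (t : ℝ) : (0:ℝ) < 1 + t ^ 2 := by positivity

lemma uu_pos (t : ℝ) : 0 < uu t := Real.rpow_pos_of_pos (base_pos t) _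

lemma uu_hasDerivAt (t : ℝ) : HasDerivAt uu (du t) t := by
  have h1 : HasDerivAt (fun s : ℝ => 1 + s ^ 2) (2 * t) t := by
    simpa using (hasDerivAt_pow 2 t).const_add 1
  have h2 := h1.rpow_const (p := (-(5/8) : ℝ)) (Or.inl (base_pos t).ne')
  convert h2 using 1
  · rfl
  · unfold du; ring

lemma uu_contDiff : ContDiff ℝ (⊤ : ℕ∞) uu := by
  rw [contDiff_iff_contDiffAt]
  intro t
  exact ((contDiff_const.add (contDiff_id.pow 2)).contDiffAt).rpow_const_of_ne (base_pos t).ne'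

lemma du_continuous : Continuous du := by
  have h : Continuous fun t : ℝ => (1 + t ^ 2) ^ ((-(5/8) : ℝ) - 1) := by
    apply Continuous.rpow_const (by continuity)
    exact fun t => Or.inl (base_pos t).ne'
  unfold du
  exact (continuous_const.mul h).mul (continuous_const.mul continuous_id)

/-- the counterexample function -/
def gg : ℂ → ℂ := fun z => (uu z.re : ℂ) * (uu z.im : ℂ)

lemma gg_contDiff : ContDiff ℝ (⊤ : ℕ∞) gg := by
  have h1 : ContDiff ℝ (⊤ : ℕ∞) fun z : ℂ => uu z.re := uu_contDiff.comp Complex.reCLM.contDiff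
  have h2 : ContDiff ℝ (⊤ : ℕ∞) fun z : ℂ => uu z.im := uu_contDiff.comp Complex.imCLM.contDiff
  exact (Complex.ofRealCLM.contDiff.comp h1).mul (Complex.ofRealCLM.contDiff.comp h2)

lemma gg_im (z : ℂ) : (gg z).im = 0 := by
  simp [gg, ← Complex.ofReal_mul]

/-- the full Fréchet derivative of `gg` -/
def DG (z : ℂ) : ℂ →L[ℝ] ℂ :=
  ((uu z.re : ℂ)) • (Complex.ofRealCLM.comp
      (((1 : ℝ →L[ℝ] ℝ).smulRight (du z.im)).comp Complex.imCLM)) +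
  ((uu z.im : ℂ)) • (Complex.ofRealCLM.comp
      (((1 : ℝ →L[ℝ] ℝ).smulRight (du z.re)).comp Complex.reCLM))

lemma gg_hasFDerivAt (z : ℂ) : HasFDerivAt gg (DG z) z := by
  have hA : HasFDerivAt (fun w : ℂ => ((uu w.re : ℝ) : ℂ))
      (Complex.ofRealCLM.comp
        (((1 : ℝ →L[ℝ] ℝ).smulRight (du z.re)).comp Complex.reCLM)) z := by
    exact Complex.ofRealCLM.hasFDerivAt.comp z
      (((uu_hasDerivAt z.re).hasFDerivAt).comp z Complex.reCLM.hasFDerivAt)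
  have hB : HasFDerivAt (fun w : ℂ => ((uu w.im : ℝ) : ℂ))
      (Complex.ofRealCLM.comp
        (((1 : ℝ →L[ℝ] ℝ).smulRight (du z.im)).comp Complex.imCLM)) z := by
    exact Complex.ofRealCLM.hasFDerivAt.comp z
      (((uu_hasDerivAt z.im).hasFDerivAt).comp z Complex.imCLM.hasFDerivAt)
  exact hA.mul hB

lemma pdx_gg (z : ℂ) : pdx gg z = ((du z.re * uu z.im : ℝ) : ℂ) := by
  rw [pdx, (gg_hasFDerivAt z).fderiv]
  simp [DG, ContinuousLinearMap.smulRight_apply, mul_comm]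

lemma pdy_gg (z : ℂ) : pdy gg z = ((uu z.re * du z.im : ℝ) : ℂ) := by
  rw [pdy, (gg_hasFDerivAt z).fderiv]
  simp [DG, ContinuousLinearMap.smulRight_apply]

lemma re_Zbar (z : ℂ) :
    (Zbarop gg z).re = (du z.re - z.re * uu z.re / 2) * uu z.im := by
  rw [Zbarop, pdzbar, pdx_gg, pdy_gg]
  simp [gg, Complex.add_re, Complex.sub_re, Complex.mul_re, Complex.mul_im]
  ring

lemma uu_sq_rpow (t : ℝ) : (uu t) ^ 2 = (1 + t ^ 2) ^ (-(5/4) : ℝ) := by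
  rw [uu, ← Real.rpow_natCast ((1 + t ^ 2) ^ (-(5/8) : ℝ)) 2,
    ← Real.rpow_mul (base_pos t).le]
  norm_num

lemma uu_sq_le (t : ℝ) : (uu t) ^ 2 ≤ (1 + t ^ 2)⁻¹ := by
  rw [uu_sq_rpow, ← Real.rpow_neg_one (1 + t ^ 2)]
  exact Real.rpow_le_rpow_of_exponent_le (by nlinarith [sq_nonneg t]) (by norm_num)

lemma uu_sq_integrable : Integrable (fun t : ℝ => (uu t) ^ 2) := by
  apply integrable_inv_one_add_sq.mono' ((uu_contDiff.continuous.pow 2).aestronglyMeasurable)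
  filter_upwards with t
  rw [Real.norm_eq_abs, Pi.pow_apply, _root_.abs_of_nonneg (sq_nonneg (uu t))]
  exact uu_sq_le t

lemma norm_gg (z : ℂ) : ‖gg z‖ = uu z.re * uu z.im := by
  rw [gg, norm_mul, Complex.norm_real, Complex.norm_real, Real.norm_eq_abs, Real.norm_eq_abs,
    abs_of_pos (uu_pos _), abs_of_pos (uu_pos _)]

lemma gg_memLp : MemLp gg 2 (volume : Measure ℂ) := by
  have hgm : AEStronglyMeasurable gg (volume : Measure ℂ) :=
    gg_contDiff.continuous.aestronglyMeasurable
  rw [memLp_two_iff_integrable_sq_norm hgm]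
  have hsq : (fun z : ℂ => ‖gg z‖ ^ 2)
      = (fun p : ℝ × ℝ => (uu p.1) ^ 2 * (uu p.2) ^ 2) ∘ Complex.measurableEquivRealProd := by
    funext z
    show ‖gg z‖ ^ 2 = _
    simp only [Function.comp_apply, Complex.measurableEquivRealProd_apply]
    rw [norm_gg]
    ring
  rw [hsq, MeasurePreserving.integrable_comp_emb Complex.volume_preserving_equiv_real_prod
    (MeasurableEquiv.measurableEmbedding _)]
  exact uu_sq_integrable.mul_prod uu_sq_integrable

/-! ### amalgam summability -/

def bz (m : ℤ) : ℝ := uu ((m.natAbs - 1 : ℕ) : ℝ)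

lemma bz_nonneg (m : ℤ) : 0 ≤ bz m := (uu_pos _).le

lemma uu_le_of_abs_le {a t : ℝ} (ha : 0 ≤ a) (h : a ≤ |t|) : uu t ≤ uu a := by
  apply Real.rpow_le_rpow_of_nonpos (base_pos a) _ (by norm_num)
  have h2 : a ^ 2 ≤ |t| ^ 2 := pow_le_pow_left₀ ha h 2
  rw [_root_.sq_abs] at h2
  linarith

lemma natAbs_le_abs_t {m : ℤ} {t : ℝ} (h1 : (m : ℝ) ≤ t) (h2 : t ≤ (m : ℝ) + 1) :
    ((m.natAbs - 1 : ℕ) : ℝ) ≤ |t| := by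
  rcases Nat.eq_zero_or_pos m.natAbs with h | h
  · simp [h]
  · have hm : ((m.natAbs : ℕ) : ℝ) = |(m : ℝ)| := by
      rw [Nat.cast_natAbs, Int.cast_abs]
    have habs : |(m : ℝ)| ≤ |t| + 1 := by
      have hd : |(m : ℝ) - t| ≤ 1 := abs_le.2 ⟨by linarith, by linarith⟩
      calc |(m : ℝ)| = |t + ((m : ℝ) - t)| := by ring_nf
        _ ≤ |t| + |(m : ℝ) - t| := abs_add_le _ _
        _ ≤ |t| + 1 := by linarith
    have hsub : ((m.natAbs - 1 : ℕ) : ℝ) = (m.natAbs : ℝ) - 1 := by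
      have h1 : 1 ≤ m.natAbs := h
      push_cast [h1]
      ring
    rw [hsub, hm]
    linarith

lemma amalgam_le (k : ℤ × ℤ) : amalgamNorm gg k ≤ bz k.1 * bz k.2 := by
  apply Real.sSup_le
  · rintro v ⟨z, hz, rfl⟩
    simp only [norm_gg]
    obtain ⟨⟨hx1, hx2⟩, hy1, hy2⟩ := hz
    have h1 : uu z.re ≤ bz k.1 :=
      uu_le_of_abs_le (Nat.cast_nonneg _) (natAbs_le_abs_t hx1 hx2)
    have h2 : uu z.im ≤ bz k.2 :=
      uu_le_of_abs_le (Nat.cast_nonneg _) (natAbs_le_abs_t hy1 hy2)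
    exact mul_le_mul h1 h2 (uu_pos _).le (bz_nonneg _)
  · exact mul_nonneg (bz_nonneg _) (bz_nonneg _)

lemma summable_cc : Summable (fun n : ℕ => uu (n : ℝ)) := by
  rw [← summable_nat_add_iff 1]
  have hs : Summable (fun n : ℕ => ((n : ℝ) + 1) ^ (-(5/4) : ℝ)) := by
    have := (summable_nat_add_iff (f := fun n : ℕ => (n : ℝ) ^ (-(5/4) : ℝ)) 1).2
      (Real.summable_nat_rpow.mpr (by norm_num))
    simpa using this
  apply Summable.of_nonneg_of_le (fun n => (uu_pos _).le) _ hs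
  intro n
  set a : ℝ := (n : ℝ) + 1 with ha
  have h0 : (0:ℝ) < a := by positivity
  have hcast : ((n + 1 : ℕ) : ℝ) = a := by push_cast; ring
  have hb : (a ^ 2 : ℝ) ≤ 1 + a ^ 2 := by linarith
  have h3 : (1 + a ^ 2) ^ (-(5/8) : ℝ) ≤ (a ^ 2) ^ (-(5/8) : ℝ) :=
    Real.rpow_le_rpow_of_nonpos (by positivity) hb (by norm_num)
  have h4 : (a ^ 2 : ℝ) ^ (-(5/8) : ℝ) = a ^ (-(5/4) : ℝ) := by
    rw [← Real.rpow_natCast a 2, ← Real.rpow_mul h0.le]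
    norm_num
  calc uu ((n + 1 : ℕ) : ℝ) = (1 + a ^ 2) ^ (-(5/8) : ℝ) := by rw [hcast, uu]
    _ ≤ (a ^ 2) ^ (-(5/8) : ℝ) := h3
    _ = a ^ (-(5/4) : ℝ) := h4

lemma summable_shift : Summable (fun n : ℕ => uu (((n - 1 : ℕ)) : ℝ)) := by
  apply (summable_nat_add_iff 1).1
  simpa using summable_cc

lemma summable_bz : Summable bz := by
  apply Summable.of_nat_of_neg
  · have h : (fun n : ℕ => bz (n : ℤ)) = fun n : ℕ => uu (((n - 1 : ℕ)) : ℝ) := by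
      funext n; simp [bz]
    rw [h]; exact summable_shift
  · have h : (fun n : ℕ => bz (-(n : ℤ))) = fun n : ℕ => uu (((n - 1 : ℕ)) : ℝ) := by
      funext n; simp [bz]
    rw [h]; exact summable_shift

lemma summable_amalgam : Summable (amalgamNorm gg) := by
  apply Summable.of_nonneg_of_le _ amalgam_le
    (summable_bz.mul_of_nonneg summable_bz (fun _ => bz_nonneg _) (fun _ => bz_nonneg _))
  intro k
  apply Real.sSup_nonneg
  rintro v ⟨z, _, rfl⟩
  exact norm_nonneg _

/-! ### divergence of the Zbar integral -/

def F1 (x : ℝ) : ℝ≥0∞ := ENNReal.ofReal ((du x - x * uu x / 2) ^ 2)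

def F2 (y : ℝ) : ℝ≥0∞ := ENNReal.ofReal ((uu y) ^ 2)

lemma meas_F1 : Measurable F1 :=
  Measurable.ennreal_ofReal
    (((du_continuous.sub ((continuous_id.mul uu_contDiff.continuous).div_const 2)).pow
      2).measurable)

lemma meas_F2 : Measurable F2 :=
  Measurable.ennreal_ofReal ((uu_contDiff.continuous.pow 2).measurable)

lemma pointwise (z : ℂ) : F1 z.re * F2 z.im ≤ (‖Zbarop gg z‖₊ : ℝ≥0∞) ^ 2 := by
  have h1 : ((du z.re - z.re * uu z.re / 2) * uu z.im) ^ 2 ≤ ‖Zbarop gg z‖ ^ 2 := by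
    rw [← re_Zbar]
    calc (Zbarop gg z).re ^ 2 = |(Zbarop gg z).re| ^ 2 := (_root_.sq_abs _).symm
      _ ≤ ‖Zbarop gg z‖ ^ 2 := by
          apply pow_le_pow_left₀ (abs_nonneg _)
          exact Complex.abs_re_le_norm _
  have h2 : F1 z.re * F2 z.im
      = ENNReal.ofReal (((du z.re - z.re * uu z.re / 2) * uu z.im) ^ 2) := by
    rw [F1, F2, ← ENNReal.ofReal_mul (sq_nonneg _)]
    ring_nf
  have h3 : (‖Zbarop gg z‖₊ : ℝ≥0∞) ^ 2 = ENNReal.ofReal (‖Zbarop gg z‖ ^ 2) := by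
    rw [ENNReal.ofReal_pow (norm_nonneg _), ofReal_norm]; rfl
  rw [h2, h3]
  exact ENNReal.ofReal_le_ofReal h1

lemma F2_pos : 0 < ∫⁻ y, F2 y := by
  rw [lintegral_pos_iff_support meas_F2]
  have hsupp : Function.support F2 = Set.univ := by
    ext y
    simp only [Function.mem_support, Set.mem_univ, iff_true, F2, ne_eq,
      ENNReal.ofReal_eq_zero, not_le]
    exact pow_pos (uu_pos y) 2
  rw [hsupp, Real.volume_univ]
  exact ENNReal.zero_lt_top

lemma rpow_half_lint : ∫⁻ x in Set.Ioi (1:ℝ), ENNReal.ofReal (x ^ (-(1/2) : ℝ)) = ⊤ := by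
  by_contra h
  have hmeas : Measurable fun x : ℝ => x ^ (-(1/2) : ℝ) :=
    Measurable.pow measurable_id measurable_const
  have hnn : ∀ᵐ x ∂(volume.restrict (Set.Ioi (1:ℝ))), 0 ≤ x ^ (-(1/2) : ℝ) := by
    filter_upwards [ae_restrict_mem measurableSet_Ioi] with x hx
    exact Real.rpow_nonneg (by linarith [Set.mem_Ioi.1 hx]) _
  have hint : IntegrableOn (fun x : ℝ => x ^ (-(1/2) : ℝ)) (Set.Ioi 1) := by
    refine ⟨hmeas.aestronglyMeasurable, ?_⟩
    rw [hasFiniteIntegral_iff_ofReal hnn]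
    exact lt_top_iff_ne_top.2 h
  rw [integrableOn_Ioi_rpow_iff zero_lt_one] at hint
  norm_num at hint

lemma F1_lower {x : ℝ} (hx : x ∈ Set.Ioi (1:ℝ)) :
    ENNReal.ofReal (((2:ℝ) ^ (-(5/4) : ℝ) / 4) * x ^ (-(1/2) : ℝ)) ≤ F1 x := by
  have hx1 : (1:ℝ) < x := hx
  have hx0 : (0:ℝ) < x := by linarith
  apply ENNReal.ofReal_le_ofReal
  have hB : (0:ℝ) < (1 + x ^ 2) ^ ((-(5/8) : ℝ) - 1) := Real.rpow_pos_of_pos (base_pos x) _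
  have hdu : du x ≤ 0 := by
    rw [du]; nlinarith
  have hu := uu_pos x
  have hA : (0:ℝ) ≤ x * uu x / 2 := by positivity
  have hP : du x - x * uu x / 2 ≤ -(x * uu x / 2) := by linarith
  have hQ : (x * uu x / 2) ^ 2 ≤ (du x - x * uu x / 2) ^ 2 := by
    nlinarith [mul_self_le_mul_self hA (by linarith : x * uu x / 2 ≤ -(du x - x * uu x / 2))]
  have hval : (x * uu x / 2) ^ 2 = x ^ 2 * (1 + x ^ 2) ^ (-(5/4) : ℝ) / 4 := by
    have := uu_sq_rpow x
    nlinarith [uu_sq_rpow x]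
  have hbase : (2 * x ^ 2 : ℝ) ^ (-(5/4) : ℝ) ≤ (1 + x ^ 2) ^ (-(5/4) : ℝ) :=
    Real.rpow_le_rpow_of_nonpos (by positivity) (by nlinarith) (by norm_num)
  have hsplit : (2 * x ^ 2 : ℝ) ^ (-(5/4) : ℝ)
      = (2:ℝ) ^ (-(5/4) : ℝ) * x ^ (-(5/2) : ℝ) := by
    rw [Real.mul_rpow (by norm_num) (sq_nonneg x), ← Real.rpow_natCast x 2,
      ← Real.rpow_mul hx0.le]
    norm_num
  have hxx : x ^ 2 * x ^ (-(5/2) : ℝ) = x ^ (-(1/2) : ℝ) := by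
    rw [← Real.rpow_natCast x 2, ← Real.rpow_add hx0]
    norm_num
  calc (2:ℝ) ^ (-(5/4) : ℝ) / 4 * x ^ (-(1/2) : ℝ)
      = x ^ 2 * ((2:ℝ) ^ (-(5/4) : ℝ) * x ^ (-(5/2) : ℝ)) / 4 := by
        rw [← hxx]; ring
    _ = x ^ 2 * (2 * x ^ 2 : ℝ) ^ (-(5/4) : ℝ) / 4 := by rw [hsplit]
    _ ≤ x ^ 2 * (1 + x ^ 2) ^ (-(5/4) : ℝ) / 4 := by nlinarith
    _ = (x * uu x / 2) ^ 2 := hval.symm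
    _ ≤ (du x - x * uu x / 2) ^ 2 := hQ

lemma F1_top : ∫⁻ x, F1 x = ⊤ := by
  have hc : (0:ℝ) < (2:ℝ) ^ (-(5/4) : ℝ) / 4 := by positivity
  have hlow : ∫⁻ x in Set.Ioi (1:ℝ),
      ENNReal.ofReal (((2:ℝ) ^ (-(5/4) : ℝ) / 4) * x ^ (-(1/2) : ℝ)) = ⊤ := by
    simp_rw [ENNReal.ofReal_mul hc.le]
    rw [lintegral_const_mul' _ _ ENNReal.ofReal_ne_top, rpow_half_lint,
      ENNReal.mul_top (by simp [ENNReal.ofReal_eq_zero, not_le, hc])]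
  rw [← top_le_iff, ← hlow]
  calc ∫⁻ x in Set.Ioi (1:ℝ),
        ENNReal.ofReal (((2:ℝ) ^ (-(5/4) : ℝ) / 4) * x ^ (-(1/2) : ℝ))
      ≤ ∫⁻ x in Set.Ioi (1:ℝ), F1 x :=
        setLIntegral_mono meas_F1 (fun x hx => F1_lower hx)
    _ ≤ ∫⁻ x, F1 x := setLIntegral_le_lintegral _ _

lemma lint_prod : ∫⁻ z : ℂ, F1 z.re * F2 z.im = (∫⁻ x, F1 x) * ∫⁻ y, F2 y := by
  have h : ∫⁻ z : ℂ, F1 z.re * F2 z.im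
      = ∫⁻ p : ℝ × ℝ, F1 p.1 * F2 p.2 ∂((volume : Measure ℝ).prod volume) :=
    Complex.volume_preserving_equiv_real_prod.lintegral_comp
      ((meas_F1.comp measurable_fst).mul (meas_F2.comp measurable_snd))
  rw [h, lintegral_prod_mul meas_F1.aemeasurable meas_F2.aemeasurable]

end Stmt13Aux

-- STATEMENT 13
theorem stmt13 :
    ∃ g : ℂ → ℂ, ContDiff ℝ (⊤ : ℕ∞) g ∧ (∀ z, (g z).im = 0) ∧
      MemLp g 2 (volume : Measure ℂ) ∧ Summable (amalgamNorm g) ∧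
      (∫⁻ z : ℂ, (‖Zbarop g z‖₊ : ℝ≥0∞)^2) = ⊤ := by
  refine ⟨Stmt13Aux.gg, Stmt13Aux.gg_contDiff, Stmt13Aux.gg_im, Stmt13Aux.gg_memLp,
    Stmt13Aux.summable_amalgam, ?_⟩
  rw [← top_le_iff]
  calc (⊤ : ℝ≥0∞) = (∫⁻ x, Stmt13Aux.F1 x) * ∫⁻ y, Stmt13Aux.F2 y := by
        rw [Stmt13Aux.F1_top, ENNReal.top_mul Stmt13Aux.F2_pos.ne']
    _ = ∫⁻ z : ℂ, Stmt13Aux.F1 z.re * Stmt13Aux.F2 z.im := Stmt13Aux.lint_prod.symm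
    _ ≤ ∫⁻ z : ℂ, (‖Zbarop Stmt13Aux.gg z‖₊ : ℝ≥0∞)^2 := lintegral_mono Stmt13Aux.pointwise
end
end

section
/- There exists a continuous function f : ℂ → ℝ with f ∈ L²(ℂ), whose partial derivatives exist outside a set of Lebesgue measure zero, such that the (almost-everywhere defined) functions Zf and Z̄f belong to L²(ℂ), and yet Σ_{k∈ℤ²} sup_{z ∈ k+[0,1]²} |f(z)| = +∞ (i.e., f ∉ W(C₀, ℓ¹)). -/
open MeasureTheory Complex
open scoped ENNReal NNReal
noncomputable section

/-!
The function is a sum of disjointly supported smooth bumps: for `n : ℕ` a bump of height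
`1 / (n + 1)` and radius `1 / (4 (n + 1))` sits in the cell `(n, 0) + [0,1]²`. The heights are
not summable, so neither are the local suprema. Height over radius is constant, so the gradient
is bounded, and `|z| · |f z| ≤ 2`; hence `f`, `Zf` and `Z̄f` are bounded. They all vanish off the
union of the supports, whose area `∑ π r_n²` is finite, so they lie in `L²`.
-/

open Metric Set Filter Topology

theorem norm_pdx_le (f : ℂ → ℂ) (z : ℂ) : ‖pdx f z‖ ≤ ‖fderiv ℝ f z‖ := by
  simpa [pdx] using (fderiv ℝ f z).le_opNorm 1

theorem norm_pdy_le (f : ℂ → ℂ) (z : ℂ) : ‖pdy f z‖ ≤ ‖fderiv ℝ f z‖ := by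
  simpa [pdy] using (fderiv ℝ f z).le_opNorm I

theorem norm_Zop_le (f : ℂ → ℂ) (z : ℂ) : ‖Zop f z‖ ≤ 2 * ‖fderiv ℝ f z‖ + ‖z‖ * ‖f z‖ := by
  calc ‖Zop f z‖ ≤ ‖pdx f z‖ + ‖I * pdy f z‖ + ‖(1/2 : ℂ) * (starRingEnd ℂ) z * f z‖ :=
        (norm_add_le _ _).trans (add_le_add_left (norm_sub_le _ _) _)
    _ = ‖pdx f z‖ + ‖pdy f z‖ + ‖z‖ * ‖f z‖ / 2 := by
      simp only [Complex.norm_mul, norm_I, one_mul, one_div, norm_inv, norm_ofNat, RCLike.norm_conj]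
      ring
    _ ≤ 2 * ‖fderiv ℝ f z‖ + ‖z‖ * ‖f z‖ := by
      linarith [norm_pdx_le f z, norm_pdy_le f z, mul_nonneg (norm_nonneg z) (norm_nonneg (f z))]

theorem norm_Zbarop_le (f : ℂ → ℂ) (z : ℂ) :
    ‖Zbarop f z‖ ≤ 2 * ‖fderiv ℝ f z‖ + ‖z‖ * ‖f z‖ := by
  calc ‖Zbarop f z‖ ≤ ‖pdx f z‖ + ‖I * pdy f z‖ + ‖(1/2 : ℂ) * z * f z‖ :=
        (norm_sub_le _ _).trans (add_le_add_left (norm_add_le _ _) _)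
    _ = ‖pdx f z‖ + ‖pdy f z‖ + ‖z‖ * ‖f z‖ / 2 := by
      simp only [Complex.norm_mul, norm_I, one_mul, one_div, norm_inv, norm_ofNat]
      ring
    _ ≤ 2 * ‖fderiv ℝ f z‖ + ‖z‖ * ‖f z‖ := by
      linarith [norm_pdx_le f z, norm_pdy_le f z, mul_nonneg (norm_nonneg z) (norm_nonneg (f z))]

theorem measurable_Zop {f : ℂ → ℂ} (hf : Measurable f) : Measurable (Zop f) := by
  unfold Zop pdz pdx pdy
  fun_prop

theorem measurable_Zbarop {f : ℂ → ℂ} (hf : Measurable f) : Measurable (Zbarop f) := by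
  unfold Zbarop pdzbar pdx pdy
  fun_prop

theorem Zop_eq_zero_of_eventuallyEq_zero {f : ℂ → ℂ} {z : ℂ} (h : f =ᶠ[𝓝 z] 0) :
    Zop f z = 0 := by
  simpa [h.eq_of_nhds, h.fderiv_eq] using norm_Zop_le f z

theorem Zbarop_eq_zero_of_eventuallyEq_zero {f : ℂ → ℂ} {z : ℂ} (h : f =ᶠ[𝓝 z] 0) :
    Zbarop f z = 0 := by
  simpa [h.eq_of_nhds, h.fderiv_eq] using norm_Zbarop_le f z

theorem MeasureTheory.memLp_of_bound_of_eq_zero_off {α E : Type*} [MeasurableSpace α]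
    {μ : Measure α} [NormedAddCommGroup E] {p : ℝ≥0∞} {S : Set α} {f : α → E}
    (hS : MeasurableSet S) (hμS : μ S ≠ ∞) (hf : AEStronglyMeasurable f μ) (C : ℝ)
    (hC : ∀ x, ‖f x‖ ≤ C) (h0 : ∀ x ∉ S, f x = 0) : MemLp f p μ := by
  rw [← indicator_eq_self.2 (Function.support_subset_iff'.2 h0), memLp_indicator_iff_restrict hS]
  have : IsFiniteMeasure (μ.restrict S) := isFiniteMeasure_restrict.2 hμS
  exact .of_bound hf.restrict C (ae_of_all _ hC)

namespace AmalgamCounterexample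

def bump : ContDiffBump (0 : ℂ) := ⟨1/2, 1, by norm_num, by norm_num⟩

def center (n : ℕ) : ℂ := ⟨n + 1/2, 1/2⟩

def height (n : ℕ) : ℝ := (n + 1)⁻¹

def radius (n : ℕ) : ℝ := height n / 4

def spike (n : ℕ) (z : ℂ) : ℝ := height n * bump ((radius n)⁻¹ • (z - center n))

def spikeSum (z : ℂ) : ℂ := ((∑' n, spike n z : ℝ) : ℂ)

def spikeSupport : Set ℂ := ⋃ n, closedBall (center n) (radius n)

theorem height_pos (n : ℕ) : 0 < height n := by unfold height; positivity

theorem height_le_one (n : ℕ) : height n ≤ 1 :=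
  inv_le_one_of_one_le₀ (by simp)

theorem radius_pos (n : ℕ) : 0 < radius n := by unfold radius; linarith [height_pos n]

theorem radius_le (n : ℕ) : radius n ≤ 1 / 4 := by
  unfold radius; linarith [height_le_one n]

theorem one_le_dist_center {m n : ℕ} (h : m ≠ n) : 1 ≤ dist (center m) (center n) := by
  rw [Complex.dist_of_im_eq (z := center m) (w := center n) rfl, Real.dist_eq]
  have : (1 : ℤ) ≤ |(m : ℤ) - n| := Int.one_le_abs (sub_ne_zero.2 (by exact_mod_cast h))
  simpa [center] using (show (1 : ℝ) ≤ |(m : ℝ) - n| by exact_mod_cast this)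

theorem spike_nonneg (n : ℕ) (z : ℂ) : 0 ≤ spike n z :=
  mul_nonneg (height_pos n).le bump.nonneg

theorem spike_le_height (n : ℕ) (z : ℂ) : spike n z ≤ height n :=
  mul_le_of_le_one_right (height_pos n).le bump.le_one

theorem spike_center (n : ℕ) : spike n (center n) = height n := by
  simp [spike, bump.one_of_mem_closedBall (mem_closedBall_self bump.rIn_pos.le)]

theorem spike_eq_zero_of_radius_le_dist {n : ℕ} {z : ℂ} (h : radius n ≤ dist z (center n)) :
    spike n z = 0 := by
  refine mul_eq_zero_of_right _ (bump.zero_of_le_dist ?_)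
  rw [dist_zero_right, norm_smul, norm_inv, Real.norm_of_nonneg (radius_pos n).le,
    ← dist_eq_norm, show bump.rOut = 1 from rfl]
  exact (one_le_inv_mul₀ (radius_pos n)).2 h

theorem dist_center_lt_of_spike_ne_zero {n : ℕ} {z : ℂ} (h : spike n z ≠ 0) :
    dist z (center n) < radius n :=
  not_le.1 (mt spike_eq_zero_of_radius_le_dist h)

theorem eq_of_spike_ne_zero {m n : ℕ} {z w : ℂ} (hz : spike m z ≠ 0) (hw : spike n w ≠ 0)
    (hzw : dist z w < 1 / 2) : m = n := by
  by_contra hmn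
  linarith [dist_triangle4 (center m) z w (center n), dist_comm (center m) z,
    one_le_dist_center hmn, dist_center_lt_of_spike_ne_zero hz,
    dist_center_lt_of_spike_ne_zero hw, radius_le m, radius_le n]

theorem spikeSum_eq_of_forall_ne {n : ℕ} {z : ℂ} (h : ∀ m ≠ n, spike m z = 0) :
    spikeSum z = spike n z := by
  rw [spikeSum, tsum_eq_single n h]

theorem spikeSum_center (n : ℕ) : spikeSum (center n) = height n := by
  rw [spikeSum_eq_of_forall_ne fun m hm => spike_eq_zero_of_radius_le_dist ?_, spike_center]
  linarith [radius_le m, one_le_dist_center hm, dist_comm (center m) (center n)]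

theorem exists_spikeSum_eventuallyEq (z₀ : ℂ) :
    ∃ n, spikeSum =ᶠ[𝓝 z₀] fun z => (spike n z : ℂ) := by
  have hball : ball z₀ (1 / 4) ∈ 𝓝 z₀ := ball_mem_nhds z₀ (by norm_num)
  by_cases h : ∃ n, ∃ w ∈ ball z₀ (1 / 4), spike n w ≠ 0
  · obtain ⟨n, w, hw, hn⟩ := h
    refine ⟨n, eventually_of_mem hball fun z hz => spikeSum_eq_of_forall_ne fun m hm => ?_⟩
    by_contra hm'
    refine hm (eq_of_spike_ne_zero hm' hn ?_)
    linarith [dist_triangle_right z w z₀, mem_ball.1 hz, mem_ball.1 hw]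
  · push Not at h
    exact ⟨0, eventually_of_mem hball fun z hz => spikeSum_eq_of_forall_ne fun m _ => h m z hz⟩

theorem exists_spikeSum_eq (z : ℂ) : ∃ n, spikeSum z = spike n z :=
  (exists_spikeSum_eventuallyEq z).imp fun _ h => h.eq_of_nhds

theorem contDiff_spike (n : ℕ) : ContDiff ℝ 1 fun z => (spike n z : ℂ) :=
  ofRealCLM.contDiff.comp <| contDiff_const.mul <|
    bump.contDiff.comp ((contDiff_id.sub contDiff_const).const_smul _)

theorem continuous_spikeSum : Continuous spikeSum :=
  continuous_iff_continuousAt.2 fun z =>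
    let ⟨n, hn⟩ := exists_spikeSum_eventuallyEq z
    (contDiff_spike n).continuous.continuousAt.congr hn.symm

theorem differentiable_spikeSum : Differentiable ℝ spikeSum := fun z =>
  let ⟨n, hn⟩ := exists_spikeSum_eventuallyEq z
  ((contDiff_spike n).differentiable one_ne_zero z).congr_of_eventuallyEq hn

theorem spikeSum_im (z : ℂ) : (spikeSum z).im = 0 := Complex.ofReal_im _

theorem norm_spikeSum_le_one (z : ℂ) : ‖spikeSum z‖ ≤ 1 := by
  obtain ⟨n, hn⟩ := exists_spikeSum_eq z
  rw [hn, Complex.norm_real, Real.norm_of_nonneg (spike_nonneg n z)]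
  exact (spike_le_height n z).trans (height_le_one n)

theorem norm_mul_norm_spikeSum_le (z : ℂ) : ‖z‖ * ‖spikeSum z‖ ≤ 2 := by
  obtain ⟨n, hn⟩ := exists_spikeSum_eq z
  rw [hn, Complex.norm_real, Real.norm_of_nonneg (spike_nonneg n z)]
  by_cases h : spike n z = 0
  · simp [h]
  have hz : ‖z‖ ≤ n + 2 := by
    have hc : ‖center n‖ ≤ n + 1 := (Complex.norm_le_abs_re_add_abs_im _).trans_eq <| by
      rw [center, abs_of_pos (by positivity), abs_of_pos one_half_pos]
      ring
    linarith [norm_le_norm_add_norm_sub' z (center n), dist_eq_norm z (center n),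
      dist_center_lt_of_spike_ne_zero h, radius_le n]
  have : ((n : ℝ) + 2) * height n ≤ 2 := by
    rw [height, ← div_eq_mul_inv, div_le_iff₀ (by positivity)]
    linarith [n.cast_nonneg (α := ℝ)]
  calc ‖z‖ * spike n z ≤ (n + 2) * height n :=
        mul_le_mul hz (spike_le_height n z) (spike_nonneg n z) (by positivity)
    _ ≤ 2 := this

theorem exists_lipschitzWith_bump : ∃ K, LipschitzWith K bump :=
  ContDiff.lipschitzWith_of_hasCompactSupport bump.hasCompactSupport (bump.contDiff (n := 1))
    one_ne_zero

theorem lipschitzWith_spike {K : ℝ≥0} (hK : LipschitzWith K bump) (n : ℕ) :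
    LipschitzWith (4 * K) fun z => (spike n z : ℂ) := by
  refine LipschitzWith.of_dist_le_mul fun z w => ?_
  rw [Complex.isometry_ofReal.dist_eq, Real.dist_eq, spike, spike, ← mul_sub, abs_mul,
    abs_of_pos (height_pos n), ← Real.dist_eq]
  calc height n * dist (bump _) (bump _)
      ≤ height n * (K * dist ((radius n)⁻¹ • (z - center n)) ((radius n)⁻¹ • (w - center n))) :=
        mul_le_mul_of_nonneg_left (hK.dist_le_mul _ _) (height_pos n).le
    _ = 4 * K * dist z w := by
      rw [dist_smul₀, dist_sub_right, Real.norm_of_nonneg (inv_pos.2 (radius_pos n)).le, radius]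
      field_simp [(height_pos n).ne']

theorem norm_fderiv_spikeSum_le {K : ℝ≥0} (hK : LipschitzWith K bump) (z : ℂ) :
    ‖fderiv ℝ spikeSum z‖ ≤ 4 * K := by
  obtain ⟨n, hn⟩ := exists_spikeSum_eventuallyEq z
  rw [hn.fderiv_eq]
  exact_mod_cast norm_fderiv_le_of_lipschitz ℝ (lipschitzWith_spike hK n)

theorem spikeSum_eventuallyEq_zero {z : ℂ} (hz : z ∉ spikeSupport) : spikeSum =ᶠ[𝓝 z] 0 := by
  obtain ⟨n, hn⟩ := exists_spikeSum_eventuallyEq z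
  have hfar : (closedBall (center n) (radius n))ᶜ ∈ 𝓝 z :=
    isClosed_closedBall.isOpen_compl.mem_nhds fun h => hz (mem_iUnion_of_mem n h)
  filter_upwards [hn, hfar] with w hw hw'
  rw [hw, Pi.zero_apply, spike_eq_zero_of_radius_le_dist (not_le.1 (mt mem_closedBall.2 hw')).le,
    Complex.ofReal_zero]

theorem measurableSet_spikeSupport : MeasurableSet spikeSupport :=
  .iUnion fun _ => measurableSet_closedBall

theorem volume_spikeSupport_ne_top : volume spikeSupport ≠ ∞ := by
  have hsum : Summable fun n => radius n ^ 2 := by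
    refine ((summable_nat_add_iff 1).2 (Real.summable_one_div_nat_pow.2 one_lt_two)).div_const 16
      |>.congr fun n => ?_
    simp only [radius, height, div_pow, inv_pow]
    push_cast
    ring
  refine ne_top_of_le_ne_top ?_ (measure_iUnion_le _)
  simp_rw [Complex.volume_closedBall, ← ENNReal.ofReal_pow (radius_pos _).le]
  rw [ENNReal.tsum_mul_right, ← ENNReal.ofReal_tsum_of_nonneg (fun n => by positivity) hsum]
  exact ENNReal.mul_ne_top ENNReal.ofReal_ne_top ENNReal.coe_ne_top

theorem memLp_spikeSum : MemLp spikeSum 2 volume :=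
  memLp_of_bound_of_eq_zero_off measurableSet_spikeSupport volume_spikeSupport_ne_top
    continuous_spikeSum.aestronglyMeasurable 1 norm_spikeSum_le_one
    fun _ hz => (spikeSum_eventuallyEq_zero hz).eq_of_nhds

theorem memLp_Zop_spikeSum : MemLp (Zop spikeSum) 2 volume := by
  obtain ⟨K, hK⟩ := exists_lipschitzWith_bump
  refine memLp_of_bound_of_eq_zero_off measurableSet_spikeSupport volume_spikeSupport_ne_top
    (measurable_Zop continuous_spikeSum.measurable).aestronglyMeasurable (2 * (4 * K) + 2)
    (fun z => ?_) fun _ hz => Zop_eq_zero_of_eventuallyEq_zero (spikeSum_eventuallyEq_zero hz)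
  linarith [norm_Zop_le spikeSum z, norm_fderiv_spikeSum_le hK z, norm_mul_norm_spikeSum_le z]

theorem memLp_Zbarop_spikeSum : MemLp (Zbarop spikeSum) 2 volume := by
  obtain ⟨K, hK⟩ := exists_lipschitzWith_bump
  refine memLp_of_bound_of_eq_zero_off measurableSet_spikeSupport volume_spikeSupport_ne_top
    (measurable_Zbarop continuous_spikeSum.measurable).aestronglyMeasurable (2 * (4 * K) + 2)
    (fun z => ?_) fun _ hz => Zbarop_eq_zero_of_eventuallyEq_zero (spikeSum_eventuallyEq_zero hz)
  linarith [norm_Zbarop_le spikeSum z, norm_fderiv_spikeSum_le hK z, norm_mul_norm_spikeSum_le z]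

theorem center_mem_cell (n : ℕ) : center n ∈ cell (n, 0) := by
  simp only [cell, center, mem_ofPred_eq, mem_Icc]
  push_cast
  refine ⟨⟨?_, ?_⟩, ?_, ?_⟩ <;> linarith

theorem height_le_amalgamNorm (n : ℕ) : height n ≤ amalgamNorm spikeSum (n, 0) := by
  refine le_csSup ⟨1, ?_⟩ ⟨center n, center_mem_cell n, ?_⟩
  · rintro _ ⟨z, -, rfl⟩
    exact norm_spikeSum_le_one z
  · show ‖spikeSum (center n)‖ = height n
    rw [spikeSum_center, Complex.norm_real, Real.norm_of_nonneg (height_pos n).le]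

theorem not_summable_amalgamNorm_spikeSum : ¬ Summable (amalgamNorm spikeSum) := fun hs => by
  have hinj : Function.Injective fun n : ℕ => ((n : ℤ), (0 : ℤ)) := fun m n h => by
    simpa using congrArg Prod.fst h
  have : Summable height :=
    .of_nonneg_of_le (fun n => (height_pos n).le) height_le_amalgamNorm (hs.comp_injective hinj)
  refine Real.not_summable_natCast_inv ((summable_nat_add_iff 1).1 ?_)
  exact this.congr fun n => by simp [height]

end AmalgamCounterexample

theorem stmt14 :
    ∃ f : ℂ → ℂ, Continuous f ∧ (∀ z, (f z).im = 0) ∧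
      MemLp f 2 (volume : Measure ℂ) ∧
      (∀ᵐ z : ℂ, DifferentiableAt ℝ f z) ∧
      MemLp (Zop f) 2 (volume : Measure ℂ) ∧
      MemLp (Zbarop f) 2 (volume : Measure ℂ) ∧
      ¬ Summable (amalgamNorm f) := by
  open AmalgamCounterexample in
  exact ⟨spikeSum, continuous_spikeSum, spikeSum_im, memLp_spikeSum,
    ae_of_all _ differentiable_spikeSum, memLp_Zop_spikeSum, memLp_Zbarop_spikeSum,
    not_summable_amalgamNorm_spikeSum⟩
end
end
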